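/- Let k be a field, n ≥ 1, and R = k[x_1,…,x_n]. Let h, g_1,…,g_{n−1} ∈ k[x_n] with h monic, and let I = ⟨h, x_1 − g_1, …, x_{n−1} − g_{n−1}⟩. Then the dimension of R/I as a k-vector space equals deg(h), the degree of h. -/
import Mathlib

open Polynomial MvPolynomial

/-- Let `k` be a field, `n ≥ 1`, and `R = k[x_1, …, x_n]` (here realized with
`n + 1` variables, the last variable playing the role of `x_n`).  Let
`h, g_1, …, g_{n-1} ∈ k[x_n]` with `h` monic, and let
`I = ⟨h, x_1 - g_1, …, x_{n-1} - g_{n-1}⟩`.  Then the dimension of `R / I` as a `k`-vector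
space equals `deg h`. -/
theorem shape_position_ideal_finrank (k : Type*) [Field k] (n : ℕ)
    (h : Polynomial k) (hh : h.Monic) (g : Fin n → Polynomial k)
    (I : Ideal (MvPolynomial (Fin (n + 1)) k))
    (hI : I = Ideal.span
      ({Polynomial.aeval (MvPolynomial.X (Fin.last n)) h} ∪
        Set.range fun i : Fin n =>
          MvPolynomial.X i.castSucc
            - Polynomial.aeval (MvPolynomial.X (Fin.last n)) (g i))) :
    Module.finrank k (MvPolynomial (Fin (n + 1)) k ⧸ I) = h.natDegree := by
  classical
  set R := MvPolynomial (Fin (n + 1)) k with hR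
  set A : Polynomial k →ₐ[k] R := Polynomial.aeval (MvPolynomial.X (Fin.last n)) with hA
  set φ : R →ₐ[k] Polynomial k :=
    (MvPolynomial.aeval (Fin.snoc g Polynomial.X) :
      MvPolynomial (Fin (n + 1)) k →ₐ[k] Polynomial k) with hφ
  set ψ : R →ₐ[k] AdjoinRoot h := (Polynomial.aeval (AdjoinRoot.root h)).comp φ with hψ
  have hφlast : φ (MvPolynomial.X (Fin.last n)) = Polynomial.X := by
    rw [hφ, MvPolynomial.aeval_X, Fin.snoc_last]
  have hφcast : ∀ j : Fin n, φ (MvPolynomial.X j.castSucc) = g j := by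
    intro j; rw [hφ, MvPolynomial.aeval_X, Fin.snoc_castSucc]
  have hφX : ∀ q : Polynomial k, φ (A q) = q := by
    intro q
    rw [hA, ← Polynomial.aeval_algHom_apply, hφlast, Polynomial.aeval_X_left_apply]
  -- generators in I
  have hgenh : A h ∈ I := by
    rw [hI]; exact Ideal.subset_span (Or.inl rfl)
  have hgenl : ∀ i : Fin n, MvPolynomial.X i.castSucc - A (g i) ∈ I := by
    intro i; rw [hI]; exact Ideal.subset_span (Or.inr ⟨i, rfl⟩)
  -- key lemma
  have key : ∀ p : R, p - A (φ p) ∈ I := by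
    intro p
    induction p using MvPolynomial.induction_on with
    | C a =>
      have e1 : (MvPolynomial.C a : R) - A (φ (MvPolynomial.C a)) = 0 := by
        show (MvPolynomial.C a : MvPolynomial (Fin (n + 1)) k)
            - Polynomial.aeval (MvPolynomial.X (Fin.last n))
              (MvPolynomial.aeval (Fin.snoc g Polynomial.X) (MvPolynomial.C a)) = 0
        simp [MvPolynomial.algebraMap_eq]
      rw [e1]; exact zero_mem I
    | add p q hp hq =>
      have e : p + q - A (φ (p + q)) = (p - A (φ p)) + (q - A (φ q)) := by
        rw [map_add, map_add]; ring
      rw [e]; exact add_mem hp hq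
    | mul_X p i hp =>
      have hXi : MvPolynomial.X i - A (φ (MvPolynomial.X i)) ∈ I := by
        refine Fin.lastCases ?_ ?_ i
        · rw [hφlast, hA, Polynomial.aeval_X, sub_self]
          exact zero_mem I
        · intro j
          rw [hφcast j]
          exact hgenl j
      have e : p * MvPolynomial.X i - A (φ (p * MvPolynomial.X i)) =
          p * (MvPolynomial.X i - A (φ (MvPolynomial.X i)))
            + A (φ (MvPolynomial.X i)) * (p - A (φ p)) := by
        rw [map_mul, map_mul]; ring
      rw [e]
      exact add_mem (Ideal.mul_mem_left _ _ hXi) (Ideal.mul_mem_left _ _ hp)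
  -- kernel
  have hker : RingHom.ker ψ = I := by
    ext p
    constructor
    · intro hp
      have h0 : (AdjoinRoot.mk h) (φ p) = 0 := by
        rw [RingHom.mem_ker, hψ] at hp
        simpa [AdjoinRoot.aeval_eq] using hp
      obtain ⟨q, hq⟩ := (AdjoinRoot.mk_eq_zero.mp h0)
      have e : p = (p - A (φ p)) + A h * A q := by
        rw [← map_mul, ← hq]; ring
      rw [e]
      exact add_mem (key p) (Ideal.mul_mem_right _ _ hgenh)
    · intro hp
      rw [RingHom.mem_ker]
      rw [hI] at hp
      refine Submodule.span_induction ?_ ?_ ?_ ?_ hp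
      · rintro x (rfl | ⟨i, rfl⟩)
        · show ψ (A h) = 0
          rw [hψ, AlgHom.comp_apply, hφX, AdjoinRoot.aeval_eq, AdjoinRoot.mk_self]
        · show ψ (MvPolynomial.X i.castSucc - A (g i)) = 0
          rw [hψ, AlgHom.comp_apply, map_sub, hφcast, hφX, sub_self, map_zero]
      · simp
      · intro x y _ _ hx hy; rw [map_add, hx, hy, add_zero]
      · intro a x _ hx; rw [smul_eq_mul, map_mul, hx, mul_zero]
  -- surjectivity
  have hsurj : Function.Surjective ψ := by
    intro y
    obtain ⟨q, rfl⟩ := AdjoinRoot.mk_surjective y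
    exact ⟨A q, by rw [hψ, AlgHom.comp_apply, hφX, AdjoinRoot.aeval_eq]⟩
  have e : (R ⧸ I) ≃ₐ[k] AdjoinRoot h := by
    rw [← hker]
    exact Ideal.quotientKerAlgEquivOfSurjective hsurj
  rw [e.toLinearEquiv.finrank_eq]
  have hf := (AdjoinRoot.powerBasis hh.ne_zero).finrank
  rw [hf]
  rfl
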